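/- arXiv:1311.0138 — 2 statements merged into one kernel-verified Lean document; each statement's English description precedes it below -/
import Mathlib

section
/- With a₀ = a, b₀ = b, a_{n+1} = [b_n^{-1}, a_n], b_{n+1} = [a_n, b_n] in the free group F₂ = ⟨a,b⟩, one has ℓ(a_n) = ℓ(b_n) ≥ 2^n for all n ∈ ℕ. -/
/-!
For `n ≥ 1` write `aₙ = p s` and `bₙ = s⁻¹ q` with `p, q, s` nontrivial, `ℓ(p) = ℓ(q)`, and no
cancellation in any of the products `p s, s⁻¹ q, s p, q s⁻¹, p q, q p` (`SplitTriple p q s`).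
Expanding the commutators, the only cancellation is `s s⁻¹`: `aₙ₊₁ = (q⁻¹ s p q s⁻¹) p⁻¹` and
`bₙ₊₁ = p (q s⁻¹ p⁻¹ q⁻¹ s)`, and the new triple `(q⁻¹ s p q s⁻¹, q s⁻¹ p⁻¹ q⁻¹ s, p⁻¹)` is again
split, since each of its junctions is one of the six above or the inverse of one of them.
Hence `ℓ(aₙ) = ℓ(p) + ℓ(s) = ℓ(bₙ)` and `ℓ(aₙ₊₁) = 4 ℓ(p) + 2 ℓ(s) ≥ 2 ℓ(aₙ)`.
-/

open scoped commutatorElement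

/-- `abPair n = (aₙ, bₙ)` with `a₀ = a`, `b₀ = b`, `a_{n+1} = [bₙ⁻¹, aₙ]`,
`b_{n+1} = [aₙ, bₙ]` in the free group on two generators. -/
def abPair : ℕ → FreeGroup (Fin 2) × FreeGroup (Fin 2)
  | 0 => (FreeGroup.of 0, FreeGroup.of 1)
  | n + 1 => (⁅(abPair n).2⁻¹, (abPair n).1⁆, ⁅(abPair n).1, (abPair n).2⁆)

namespace FreeGroup

variable {α : Type*} [DecidableEq α] {x y : FreeGroup α}

def IsReducedMul (x y : FreeGroup α) : Prop := IsReduced (x.toWord ++ y.toWord)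

theorem IsReduced.invRev {L : List (α × Bool)} (h : IsReduced L) : IsReduced (invRev L) := by
  rw [isReduced_iff_reduce_eq, reduce_invRev, h.reduce_eq]

theorem IsReducedMul.toWord_mul (h : IsReducedMul x y) :
    (x * y).toWord = x.toWord ++ y.toWord := by
  rw [FreeGroup.toWord_mul, IsReduced.reduce_eq h]

theorem IsReducedMul.norm_mul (h : IsReducedMul x y) : (x * y).norm = x.norm + y.norm := by
  simp only [norm, h.toWord_mul, List.length_append]

theorem IsReducedMul.inv (h : IsReducedMul x y) : IsReducedMul y⁻¹ x⁻¹ := by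
  simpa only [IsReducedMul, toWord_inv, invRev_append] using IsReduced.invRev h

theorem toWord_prod_of_isChain {xs : List (FreeGroup α)} (hne : ∀ x ∈ xs, x ≠ 1)
    (h : xs.IsChain IsReducedMul) : xs.prod.toWord = (xs.map toWord).flatten := by
  induction xs with
  | nil => simp
  | cons x xs ih =>
    cases xs with
    | nil => simp
    | cons y ys =>
      obtain ⟨hxy, hys⟩ := List.isChain_cons_cons.mp h
      have hy : y.toWord ≠ [] := by simpa [toWord_eq_nil_iff] using hne y (by simp)
      have ih := ih (fun z hz => hne z (List.mem_cons_of_mem x hz)) hys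
      have hrest : IsReduced (y.toWord ++ (ys.map toWord).flatten) := by
        have := isReduced_toWord (x := (y :: ys).prod)
        rwa [ih, List.map_cons, List.flatten_cons] at this
      have hred : IsReducedMul x (y :: ys).prod := by
        rw [IsReducedMul, ih, List.map_cons, List.flatten_cons, ← List.append_assoc]
        exact IsReduced.append_overlap hxy hrest hy
      rw [List.prod_cons, hred.toWord_mul, ih]
      simp

theorem norm_prod_of_isChain {xs : List (FreeGroup α)} (hne : ∀ x ∈ xs, x ≠ 1)
    (h : xs.IsChain IsReducedMul) : xs.prod.norm = (xs.map norm).sum := by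
  rw [norm, toWord_prod_of_isChain hne h, List.length_flatten, List.map_map]
  rfl

theorem prod_ne_one_of_isChain {xs : List (FreeGroup α)} (hxs : xs ≠ []) (hne : ∀ x ∈ xs, x ≠ 1)
    (h : xs.IsChain IsReducedMul) : xs.prod ≠ 1 := by
  rw [Ne, ← toWord_eq_nil_iff, toWord_prod_of_isChain hne h]
  obtain ⟨x, hx⟩ := List.exists_mem_of_ne_nil xs hxs
  simpa [toWord_eq_nil_iff] using ⟨x, hx, hne x hx⟩

theorem isReducedMul_prod_of_isChain (xs ys : List (FreeGroup α)) (hne : ∀ x ∈ xs ++ ys, x ≠ 1)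
    (h : (xs ++ ys).IsChain IsReducedMul) : IsReducedMul xs.prod ys.prod := by
  have hxs := toWord_prod_of_isChain (fun x hx => hne x (List.mem_append_left ys hx))
    h.left_of_append
  have hys := toWord_prod_of_isChain (fun x hx => hne x (List.mem_append_right xs hx))
    h.right_of_append
  rw [IsReducedMul, hxs, hys, ← List.flatten_append, ← List.map_append,
    ← toWord_prod_of_isChain hne h]
  exact isReduced_toWord

structure SplitTriple (p q s : FreeGroup α) : Prop where
  p_ne_one : p ≠ 1
  q_ne_one : q ≠ 1
  s_ne_one : s ≠ 1
  p_s : IsReducedMul p s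
  sInv_q : IsReducedMul s⁻¹ q
  s_p : IsReducedMul s p
  q_sInv : IsReducedMul q s⁻¹
  p_q : IsReducedMul p q
  q_p : IsReducedMul q p

namespace SplitTriple

variable {p q s : FreeGroup α}

theorem inv_swap (h : SplitTriple p q s) : SplitTriple q⁻¹ p⁻¹ s :=
  ⟨inv_ne_one.mpr h.q_ne_one, inv_ne_one.mpr h.p_ne_one, h.s_ne_one, by simpa using h.sInv_q.inv,
    h.p_s.inv, by simpa using h.q_sInv.inv, h.s_p.inv, h.p_q.inv, h.q_p.inv⟩

theorem next (h : SplitTriple p q s) :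
    SplitTriple [q⁻¹, s, p, q, s⁻¹].prod [q, s⁻¹, p⁻¹, q⁻¹, s].prod p⁻¹ := by
  obtain ⟨-, -, -, qInv_s, sInv_pInv, s_qInv, pInv_sInv, qInv_pInv, pInv_qInv⟩ := h.inv_swap
  obtain ⟨hp, hq, hs, p_s, sInv_q, s_p, q_sInv, p_q, q_p⟩ := h
  refine ⟨?_, ?_, inv_ne_one.mpr hp, ?_, ?_, ?_, ?_, ?_, ?_⟩
  · exact prod_ne_one_of_isChain (by simp) (by simp [*]) (by simp [List.isChain_cons_cons, *])
  · exact prod_ne_one_of_isChain (by simp) (by simp [*]) (by simp [List.isChain_cons_cons, *])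
  · simpa using isReducedMul_prod_of_isChain [q⁻¹, s, p, q, s⁻¹] [p⁻¹] (by simp [*])
      (by simp [List.isChain_cons_cons, *])
  · simpa using isReducedMul_prod_of_isChain [p] [q, s⁻¹, p⁻¹, q⁻¹, s] (by simp [*])
      (by simp [List.isChain_cons_cons, *])
  · simpa using isReducedMul_prod_of_isChain [p⁻¹] [q⁻¹, s, p, q, s⁻¹] (by simp [*])
      (by simp [List.isChain_cons_cons, *])
  · simpa using isReducedMul_prod_of_isChain [q, s⁻¹, p⁻¹, q⁻¹, s] [p] (by simp [*])
      (by simp [List.isChain_cons_cons, *])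
  · exact isReducedMul_prod_of_isChain [q⁻¹, s, p, q, s⁻¹] [q, s⁻¹, p⁻¹, q⁻¹, s] (by simp [*])
      (by simp [List.isChain_cons_cons, *])
  · exact isReducedMul_prod_of_isChain [q, s⁻¹, p⁻¹, q⁻¹, s] [q⁻¹, s, p, q, s⁻¹] (by simp [*])
      (by simp [List.isChain_cons_cons, *])

theorem norm_next (h : SplitTriple p q s) :
    [q⁻¹, s, p, q, s⁻¹].prod.norm = p.norm + 2 * q.norm + 2 * s.norm ∧
      [q, s⁻¹, p⁻¹, q⁻¹, s].prod.norm = p.norm + 2 * q.norm + 2 * s.norm := by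
  obtain ⟨-, -, -, qInv_s, sInv_pInv, s_qInv, pInv_sInv, qInv_pInv, pInv_qInv⟩ := h.inv_swap
  obtain ⟨hp, hq, hs, p_s, sInv_q, s_p, q_sInv, p_q, q_p⟩ := h
  constructor
  all_goals
    rw [norm_prod_of_isChain (by simp [*]) (by simp [List.isChain_cons_cons, *])]
    simp only [List.map_cons, List.map_nil, List.sum_cons, List.sum_nil, norm_inv_eq]
    ring

end SplitTriple

end FreeGroup

open FreeGroup

theorem exists_splitTriple_abPair (n : ℕ) : ∃ p q s : FreeGroup (Fin 2), SplitTriple p q s ∧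
    p.norm = q.norm ∧ 2 ^ (n + 1) ≤ p.norm + s.norm ∧ abPair (n + 1) = (p * s, s⁻¹ * q) := by
  induction n with
  | zero =>
    have h : SplitTriple ((of (1 : Fin 2))⁻¹ * of 0 * of 1) (of 1 * (of 0)⁻¹ * (of 1)⁻¹)
        (of 0)⁻¹ := by
      refine ⟨by decide, by decide, by decide, ?_, ?_, ?_, ?_, ?_, ?_⟩ <;>
        · unfold IsReducedMul FreeGroup.IsReduced; decide
    refine ⟨_, _, _, h, by decide, by decide, ?_⟩
    simp only [abPair, commutatorElement_def, Prod.mk.injEq]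
    constructor <;> group
  | succ n ih =>
    obtain ⟨p, q, s, h, hpq, hlen, hab⟩ := ih
    obtain ⟨hp', hq'⟩ := h.norm_next
    refine ⟨_, _, _, h.next, by rw [hp', hq'], ?_, ?_⟩
    · rw [hp', norm_inv_eq, pow_succ]
      omega
    · rw [abPair, hab]
      simp only [commutatorElement_def, List.prod_cons, List.prod_nil, Prod.mk.injEq]
      constructor <;> group

theorem abPair_norm_eq_and_ge (n : ℕ) :
    (abPair n).1.norm = (abPair n).2.norm ∧ 2 ^ n ≤ (abPair n).2.norm := by
  cases n with
  | zero => simp [abPair]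
  | succ n =>
    obtain ⟨p, q, s, h, hpq, hlen, hab⟩ := exists_splitTriple_abPair n
    rw [hab, h.p_s.norm_mul, h.sInv_q.norm_mul, norm_inv_eq]
    omega
end

section
/- For any element w of the free group F₂, if γ(w) = max{n : w ∈ γ_n(F₂)} and w ≠ e, then the girth function α satisfies α(γ(w)) ≤ ℓ(w); combined with γ(b_n) ≥ C(1+√2)^n and ℓ(b_n) ≤ C'((3+√17)/2)^n, this yields α(m) ≤ C''·m^ν for infinitely many m, where ν = (log₂(3+√17) − 1)/log₂(1+√2). -/
/-!
Every `w ≠ 1` lies in `γ_{gam w}`, which gives the first claim. For the second, put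
`v n = a n * b n * (a n)⁻¹`; then `b (n+1) = v n * (b n)⁻¹` and
`v (n+1) = (b n)⁻¹ * (v n)² * (b n)⁻¹ * (v n)⁻¹ * b n`. The first and last letters of the reduced
words of `b n`, `v n` and `(v n)²` rule out any cancellation in these products, and this
property is passed on from `n` to `n + 1`; hence `b n ≠ 1`, and subadditivity of the word length
gives `‖b n‖ ≤ (3/2) λⁿ` with `λ = (3 + √17)/2`. Since `b (n+2)` is conjugate to
`⁅⁅(b (n+1))⁻¹, (b n)⁻¹⁆, b (n+1)⁆`, the three subgroups lemma puts `b n` in `γ_{d n + 1}` with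
`d (n+2) = 2 d (n+1) + d n + 2`, so `d n + 1 ≥ (2/μ) μⁿ` for `μ = 1 + √2`. Thus
`α (d n + 1) ≤ ‖b n‖ ≤ C (d n + 1)^ν` with `ν = log_μ λ`, the exponent of the statement.
-/

open scoped commutatorElement

/-- `gam w = max {n : w ∈ γₙ(F₂)}`, paper indexing. -/
noncomputable def gam (w : FreeGroup (Fin 2)) : ℕ :=
  sSup {n : ℕ | 1 ≤ n ∧ w ∈ Subgroup.lowerCentralSeries (⊤ : Subgroup (FreeGroup (Fin 2))) (n - 1)}

/-- `α n` is the minimal length of a nontrivial element of `γₙ(F₂)` (paper indexing). -/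
noncomputable def alphaGirth (n : ℕ) : ℕ :=
  sInf {k | ∃ w ∈ Subgroup.lowerCentralSeries (⊤ : Subgroup (FreeGroup (Fin 2))) (n - 1), w ≠ 1 ∧ w.norm = k}

namespace Subgroup

variable {G : Type*} [Group G]

/-- Hall's three subgroups lemma, modulo a normal subgroup. -/
theorem commutator_commutator_le_of_rotate {H₁ H₂ H₃ N : Subgroup G} [N.Normal]
    (h1 : ⁅⁅H₂, H₃⁆, H₁⁆ ≤ N) (h2 : ⁅⁅H₃, H₁⁆, H₂⁆ ≤ N) : ⁅⁅H₁, H₂⁆, H₃⁆ ≤ N := by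
  have modN : ∀ K₁ K₂ K₃ : Subgroup G, ⁅⁅K₁, K₂⁆, K₃⁆ ≤ N ↔
      ⁅⁅K₁.map (QuotientGroup.mk' N), K₂.map (QuotientGroup.mk' N)⁆,
        K₃.map (QuotientGroup.mk' N)⁆ = ⊥ := fun K₁ K₂ K₃ => by
    rw [← map_commutator, ← map_commutator, map_eq_bot_iff, QuotientGroup.ker_mk']
  rw [modN] at h1 h2 ⊢
  exact commutator_commutator_eq_bot_of_rotate h1 h2

theorem commutator_lowerCentralSeries_le (i j : ℕ) :
    ⁅(⊤ : Subgroup G).lowerCentralSeries i, (⊤ : Subgroup G).lowerCentralSeries j⁆ ≤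
      (⊤ : Subgroup G).lowerCentralSeries (i + j + 1) := by
  induction j generalizing i with
  | zero => rfl
  | succ j ih =>
    rw [lowerCentralSeries_succ, commutator_comm]
    apply commutator_commutator_le_of_rotate
    · rw [commutator_comm ⊤, ← lowerCentralSeries_succ,
        show i + (j + 1) + 1 = i + 1 + j + 1 by ring]
      exact ih (i + 1)
    · rw [show i + (j + 1) + 1 = i + j + 1 + 1 by ring, lowerCentralSeries_succ]
      exact commutator_mono (ih i) le_rfl

theorem commutatorElement_mem_lowerCentralSeries {i j : ℕ} {x y : G}
    (hx : x ∈ (⊤ : Subgroup G).lowerCentralSeries i)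
    (hy : y ∈ (⊤ : Subgroup G).lowerCentralSeries j) :
    ⁅x, y⁆ ∈ (⊤ : Subgroup G).lowerCentralSeries (i + j + 1) :=
  commutator_lowerCentralSeries_le i j (commutator_mem_commutator hx hy)

end Subgroup

namespace FreeGroup

variable {α : Type*}

def invLetter (p : α × Bool) : α × Bool := (p.1, !p.2)

@[simp]
theorem invLetter_invLetter (p : α × Bool) : invLetter (invLetter p) = p := by
  simp [invLetter]

@[simp]
theorem invLetter_inj {p q : α × Bool} : invLetter p = invLetter q ↔ p = q := by
  constructor
  · intro h; simpa using congrArg invLetter h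
  · rintro rfl; rfl

variable [DecidableEq α]

theorem toWord_mul_of_forall_ne_invLetter {x y : FreeGroup α}
    (h : ∀ p ∈ x.toWord.getLast?, ∀ q ∈ y.toWord.head?, q ≠ invLetter p) :
    (x * y).toWord = x.toWord ++ y.toWord := by
  rw [toWord_mul, IsReduced.reduce_eq]
  refine List.isChain_append.2 ⟨isReduced_toWord, isReduced_toWord, fun p hp q hq hpq => ?_⟩
  by_contra hne
  exact h p hp q hq (Prod.ext hpq.symm (Bool.eq_not_iff.2 (Ne.symm hne)))

theorem norm_list_prod_le (l : List (FreeGroup α)) : l.prod.norm ≤ (l.map norm).sum := by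
  induction l with
  | nil => simp
  | cons x l ih => simpa using (norm_mul_le x l.prod).trans (Nat.add_le_add_left ih _)

def HasEnds (x : FreeGroup α) (p q : α × Bool) : Prop :=
  x.toWord.head? = some p ∧ x.toWord.getLast? = some q

variable {x y : FreeGroup α} {p q p' q' : α × Bool}

theorem HasEnds.ne_one (h : HasEnds x p q) : x ≠ 1 := by
  rintro rfl
  simp [HasEnds] at h

theorem HasEnds.inv (h : HasEnds x p q) : HasEnds x⁻¹ (invLetter q) (invLetter p) := by
  simp [HasEnds, toWord_inv, invRev, List.head?_reverse, List.getLast?_reverse, h.1, h.2, invLetter]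

theorem HasEnds.mul (hx : HasEnds x p q) (hy : HasEnds y p' q') (h : p' ≠ invLetter q) :
    HasEnds (x * y) p q' := by
  have hw : (x * y).toWord = x.toWord ++ y.toWord :=
    toWord_mul_of_forall_ne_invLetter (by simp_all [HasEnds])
  simp [HasEnds, hw, List.head?_append, List.getLast?_append, hx.1, hy.2]

/-- The first and last letters of the reduced words of `b`, `v` and `v * v` are such that no
cancellation occurs in the products of `GoodEnds.step`. -/
def GoodEnds (b v : FreeGroup α) : Prop :=
  ∃ fb lb fv : α × Bool, HasEnds b fb lb ∧ HasEnds v fv (invLetter fv) ∧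
    HasEnds (v * v) fv (invLetter fv) ∧ fv ≠ fb ∧ lb ≠ invLetter fv ∧ lb ≠ invLetter fb

theorem GoodEnds.step {b v : FreeGroup α} (h : GoodEnds b v) :
    GoodEnds (v * b⁻¹) (b⁻¹ * (v * v) * b⁻¹ * v⁻¹ * b) := by
  obtain ⟨fb, lb, fv, hb, hv, hvv, h1, h2, h3⟩ := h
  have h2' : invLetter lb ≠ invLetter (invLetter fv) := fun h => h2 (invLetter_inj.1 h)
  have hfb : fv ≠ invLetter (invLetter fb) := by simpa using h1
  have hpre : HasEnds (b⁻¹ * (v * v) * b⁻¹) (invLetter lb) (invLetter fb) :=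
    (hb.inv.mul hvv hfb).mul hb.inv h2'
  have hv' : HasEnds (b⁻¹ * (v * v) * b⁻¹ * v⁻¹ * b) (invLetter lb) lb :=
    (hpre.mul hv.inv (by simpa using h1)).mul hb (by simpa using h1.symm)
  have hvv' : HasEnds (b⁻¹ * (v * v) * b⁻¹ * v * b⁻¹ * v⁻¹ * b) (invLetter lb) lb :=
    ((((hpre.mul hv hfb).mul hb.inv h2').mul hv.inv (by simpa using h1)).mul hb
      (by simpa using h1.symm))
  refine ⟨fv, invLetter fb, invLetter lb, hv.mul hb.inv h2', by simpa using hv', ?_,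
    fun h => h2 (by simp [← h]), fun h => h3 (by simp [h]), by simpa using h1.symm⟩
  rw [invLetter_invLetter]
  convert hvv' using 1
  group

end FreeGroup

namespace abPair

open FreeGroup Subgroup

def a (n : ℕ) : FreeGroup (Fin 2) := (abPair n).1

def b (n : ℕ) : FreeGroup (Fin 2) := (abPair n).2

def v (n : ℕ) : FreeGroup (Fin 2) := a n * b n * (a n)⁻¹

theorem a_succ (n : ℕ) : a (n + 1) = (b n)⁻¹ * v n := by
  change ⁅(b n)⁻¹, a n⁆ = _
  rw [commutatorElement_def, v, inv_inv]
  group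

theorem b_succ (n : ℕ) : b (n + 1) = v n * (b n)⁻¹ := by
  change ⁅a n, b n⁆ = _
  rw [commutatorElement_def, v]

theorem v_succ (n : ℕ) :
    v (n + 1) = (b n)⁻¹ * (v n * v n) * (b n)⁻¹ * (v n)⁻¹ * b n := by
  rw [v, a_succ, b_succ]
  group

theorem b_add_two (n : ℕ) :
    b (n + 2) = b (n + 1) * ⁅⁅(b (n + 1))⁻¹, (b n)⁻¹⁆, b (n + 1)⁆ * (b (n + 1))⁻¹ := by
  have ha : a (n + 1) = (b n)⁻¹ * b (n + 1) * b n := by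
    rw [a_succ, b_succ]
    group
  change ⁅a (n + 1), b (n + 1)⁆ = _
  simp only [ha, commutatorElement_def]
  group

theorem goodEnds (n : ℕ) : GoodEnds (b n) (v n) := by
  induction n with
  | zero => exact ⟨(1, true), (1, true), (0, true), by unfold HasEnds invLetter; decide⟩
  | succ n ih =>
    rw [b_succ, v_succ]
    exact ih.step

theorem b_ne_one (n : ℕ) : b n ≠ 1 := by
  obtain ⟨_, _, _, hb, -⟩ := goodEnds n
  exact hb.ne_one

theorem norm_b_succ_le (n : ℕ) : (b (n + 1)).norm ≤ (v n).norm + (b n).norm := by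
  rw [b_succ, ← norm_inv_eq (x := b n)]
  exact norm_mul_le _ _

theorem norm_v_succ_le (n : ℕ) :
    (v (n + 1)).norm ≤ (v n * v n).norm + (v n).norm + 3 * (b n).norm := by
  have h := norm_list_prod_le [(b n)⁻¹, v n * v n, (b n)⁻¹, (v n)⁻¹, b n]
  simp only [List.prod_cons, List.prod_nil, mul_one, List.map_cons, List.map_nil,
    List.sum_cons, List.sum_nil, norm_inv_eq] at h
  rw [v_succ]
  simp only [mul_assoc] at h ⊢
  omega

theorem norm_v_succ_mul_self_le (n : ℕ) :
    (v (n + 1) * v (n + 1)).norm ≤ (v n * v n).norm + 2 * (v n).norm + 4 * (b n).norm := by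
  have h := norm_list_prod_le [(b n)⁻¹, v n * v n, (b n)⁻¹, v n, (b n)⁻¹, (v n)⁻¹, b n]
  simp only [List.prod_cons, List.prod_nil, mul_one, List.map_cons, List.map_nil,
    List.sum_cons, List.sum_nil, norm_inv_eq] at h
  rw [show v (n + 1) * v (n + 1) = (b n)⁻¹ * (v n * v n) * (b n)⁻¹ * v n * (b n)⁻¹ *
    (v n)⁻¹ * b n by rw [v_succ]; group]
  simp only [mul_assoc] at h ⊢
  omega

def depth : ℕ → ℕ
  | 0 => 0
  | 1 => 1
  | n + 2 => 2 * depth (n + 1) + depth n + 2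

theorem b_mem_lowerCentralSeries (n : ℕ) :
    b n ∈ (⊤ : Subgroup (FreeGroup (Fin 2))).lowerCentralSeries (depth n) := by
  induction n using Nat.twoStepInduction with
  | zero => exact mem_top _
  | one => exact commutatorElement_mem_lowerCentralSeries (i := 0) (j := 0) (mem_top _) (mem_top _)
  | more n ih0 ih1 =>
    have h := commutatorElement_mem_lowerCentralSeries
      (commutatorElement_mem_lowerCentralSeries (inv_mem ih1) (inv_mem ih0)) ih1
    rw [show depth (n + 1) + depth n + 1 + depth (n + 1) + 1 = depth (n + 2) by
      simp only [depth]; ring] at h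
    rw [b_add_two]
    exact (lowerCentralSeries_normal ⊤ _).conj_mem _ h _

theorem depth_strictMono : StrictMono depth :=
  strictMono_nat_of_lt_succ fun n => by
    cases n with
    | zero => decide
    | succ n =>
      change depth (n + 1) < 2 * depth (n + 1) + depth n + 2
      omega

noncomputable def lengthRate : ℝ := (3 + Real.sqrt 17) / 2

noncomputable def depthRate : ℝ := 1 + Real.sqrt 2

theorem lengthRate_sq : lengthRate ^ 2 = 3 * lengthRate + 2 := by
  unfold lengthRate
  linear_combination (1 / 4 : ℝ) * Real.sq_sqrt (show (0 : ℝ) ≤ 17 by norm_num)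

theorem three_le_lengthRate : 3 ≤ lengthRate := by
  have : (3 : ℝ) ≤ Real.sqrt 17 := Real.le_sqrt_of_sq_le (by norm_num)
  unfold lengthRate
  linarith

theorem depthRate_sq : depthRate ^ 2 = 2 * depthRate + 1 := by
  unfold depthRate
  linear_combination Real.sq_sqrt (show (0 : ℝ) ≤ 2 by norm_num)

theorem two_le_depthRate : 2 ≤ depthRate := by
  have : (1 : ℝ) ≤ Real.sqrt 2 := Real.le_sqrt_of_sq_le (by norm_num)
  unfold depthRate
  linarith

/-- `(lengthRate - 1, lengthRate, 1)` is an eigenvector, for the eigenvalue `lengthRate`, of the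
matrix of the recursive bounds `norm_v_succ_le`, `norm_v_succ_mul_self_le`, `norm_b_succ_le`. -/
theorem norm_le_lengthRate_pow (n : ℕ) :
    ((v n).norm : ℝ) ≤ 3 / 2 * (lengthRate - 1) * lengthRate ^ n ∧
    ((v n * v n).norm : ℝ) ≤ 3 / 2 * lengthRate * lengthRate ^ n ∧
    ((b n).norm : ℝ) ≤ 3 / 2 * lengthRate ^ n := by
  induction n with
  | zero =>
    have hv : (v 0).norm = 3 := by decide
    have hvv : (v 0 * v 0).norm = 4 := by decide
    have hb : (b 0).norm = 1 := by decide
    have := three_le_lengthRate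
    simp only [hv, hvv, hb, pow_zero]
    refine ⟨?_, ?_, ?_⟩ <;> norm_num <;> linarith
  | succ n ih =>
    obtain ⟨hv, hvv, hb⟩ := ih
    have hv' : ((v (n + 1)).norm : ℝ) ≤ _ := Nat.cast_le.2 (norm_v_succ_le n)
    have hvv' : ((v (n + 1) * v (n + 1)).norm : ℝ) ≤ _ := Nat.cast_le.2 (norm_v_succ_mul_self_le n)
    have hb' : ((b (n + 1)).norm : ℝ) ≤ _ := Nat.cast_le.2 (norm_b_succ_le n)
    push_cast at hv' hvv' hb'
    have hsq := lengthRate_sq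
    rw [pow_succ]
    refine ⟨?_, ?_, ?_⟩
    · linear_combination hv' + hvv + hv + 3 * hb - (3 / 2 * lengthRate ^ n) * hsq
    · linear_combination hvv' + hvv + 2 * hv + 4 * hb - (3 / 2 * lengthRate ^ n) * hsq
    · linear_combination hb' + hv + hb

theorem two_mul_depthRate_pow_le (n : ℕ) :
    2 * depthRate ^ n ≤ depthRate * (depth n + 1) := by
  induction n using Nat.twoStepInduction with
  | zero => simpa [depth] using two_le_depthRate
  | one => norm_num [depth]; linarith
  | more n ih0 ih1 =>
    have hd : (depth (n + 2) : ℝ) + 1 = 2 * (depth (n + 1) + 1) + (depth n + 1) := by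
      simp only [depth]; push_cast; ring
    rw [hd]
    linear_combination 2 * ih1 + ih0 + 2 * depthRate ^ n * depthRate_sq

theorem lengthRate_pow_le (n : ℕ) :
    lengthRate ^ n ≤ (depthRate / 2) ^ Real.logb depthRate lengthRate *
      ((depth n + 1 : ℕ) : ℝ) ^ Real.logb depthRate lengthRate := by
  have hμ : 0 < depthRate := by linarith [two_le_depthRate]
  have hν : 0 ≤ Real.logb depthRate lengthRate :=
    Real.logb_nonneg (by linarith [two_le_depthRate]) (by linarith [three_le_lengthRate])
  calc lengthRate ^ n = (depthRate ^ n) ^ Real.logb depthRate lengthRate := by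
        rw [← Real.rpow_pow_comm hμ.le, Real.rpow_logb hμ (by linarith [two_le_depthRate])
          (by linarith [three_le_lengthRate])]
    _ ≤ (depthRate / 2 * ((depth n + 1 : ℕ) : ℝ)) ^ Real.logb depthRate lengthRate := by
        gcongr
        push_cast
        linarith [two_mul_depthRate_pow_le n]
    _ = _ := Real.mul_rpow (by positivity) (by positivity)

end abPair

theorem alphaGirth_le_norm {n : ℕ} {w : FreeGroup (Fin 2)}
    (hw : w ∈ (⊤ : Subgroup (FreeGroup (Fin 2))).lowerCentralSeries (n - 1)) (h1 : w ≠ 1) :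
    alphaGirth n ≤ w.norm :=
  Nat.sInf_le ⟨w, hw, h1, rfl⟩

/-- If the set in the definition of `gam w` is unbounded, its `sSup` is the junk value `0`, and
then `gam w - 1 = 0` as well. -/
theorem mem_lowerCentralSeries_gam_sub_one (w : FreeGroup (Fin 2)) :
    w ∈ (⊤ : Subgroup (FreeGroup (Fin 2))).lowerCentralSeries (gam w - 1) := by
  by_cases hbdd : BddAbove
      {n : ℕ | 1 ≤ n ∧ w ∈ (⊤ : Subgroup (FreeGroup (Fin 2))).lowerCentralSeries (n - 1)}
  · exact (Nat.sSup_mem (by exact ⟨1, le_rfl, Subgroup.mem_top w⟩) hbdd).2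
  · rw [gam, csSup_of_not_bddAbove hbdd, csSup_empty]
    exact Subgroup.mem_top w

theorem exponent_eq_logb :
    (Real.logb 2 (3 + Real.sqrt 17) - 1) / Real.logb 2 (1 + Real.sqrt 2) =
      Real.logb abPair.depthRate abPair.lengthRate := by
  have hlog : Real.logb 2 (3 + Real.sqrt 17) - 1 = Real.logb 2 abPair.lengthRate := by
    rw [abPair.lengthRate, Real.logb_div (by positivity) two_ne_zero,
      Real.logb_self_eq_one one_lt_two]
  rw [hlog, Real.logb, Real.logb, div_div_div_cancel_right₀ (Real.log_pos one_lt_two).ne',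
    Real.log_div_log]
  rfl

theorem alpha_polynomial_upper_bound :
    (∀ w : FreeGroup (Fin 2), w ≠ 1 → alphaGirth (gam w) ≤ w.norm) ∧
    ∃ C'' > 0, {m : ℕ | (alphaGirth m : ℝ) ≤
      C'' * (m : ℝ) ^ ((Real.logb 2 (3 + Real.sqrt 17) - 1) / Real.logb 2 (1 + Real.sqrt 2))
      }.Infinite := by
  open abPair in
  refine ⟨fun w hw => alphaGirth_le_norm (mem_lowerCentralSeries_gam_sub_one w) hw, ?_⟩
  rw [exponent_eq_logb]
  refine ⟨3 / 2 * (depthRate / 2) ^ Real.logb depthRate lengthRate,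
    mul_pos (by norm_num) (Real.rpow_pos_of_pos (by linarith [two_le_depthRate]) _), ?_⟩
  refine Set.infinite_of_injective_forall_mem (f := fun n => depth n + 1)
    (add_left_injective 1 |>.comp depth_strictMono.injective) fun n => ?_
  have hα : alphaGirth (depth n + 1) ≤ (b n).norm :=
    alphaGirth_le_norm (by simpa using b_mem_lowerCentralSeries n) (b_ne_one n)
  calc (alphaGirth (depth n + 1) : ℝ) ≤ (b n).norm := by exact_mod_cast hα
    _ ≤ 3 / 2 * lengthRate ^ n := (norm_le_lengthRate_pow n).2.2
    _ ≤ _ := by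
      rw [mul_assoc]
      gcongr
      exact lengthRate_pow_le n
end
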